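/- (Deterministic bound on term A.) Let μ, f, y* ∈ ℝ, σ > 0 and β ≥ 0, and suppose |μ − f| ≤ √β · σ. Then f − y* ≤ σ·τ((μ − y*)/σ) + √β · σ. In words: the gap between the optimal function value and the current best observed response is at most the expected improvement at the optimum plus √β times the posterior standard deviation there. -/

import Mathlib

open Real MeasureTheory Filter

/-- The standard normal probability density function φ. -/
noncomputable def stdNormalPDF (z : ℝ) : ℝ := (Real.sqrt (2 * Real.pi))⁻¹ * Real.exp (-z ^ 2 / 2)

/-- The standard normal cumulative distribution function Φ. -/
noncomputable def stdNormalCDF (z : ℝ) : ℝ := ∫ t in Set.Iic z, stdNormalPDF t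

/-- τ(z) = z Φ(z) + φ(z). -/
noncomputable def tau (z : ℝ) : ℝ := z * stdNormalCDF z + stdNormalPDF z

/-!
`τ(z) - z = φ(z) - z (1 - Φ(z))`. For `z ≤ 0` both terms are nonnegative; for `z > 0`, since
`-φ` is an antiderivative of `t φ(t)`, `z (1 - Φ(z)) = ∫_{t > z} z φ(t) ≤ ∫_{t > z} t φ(t) = φ(z)`.
So `τ(z) ≥ z`, i.e. `σ τ((μ - y*)/σ) ≥ μ - y*`, and `f - μ ≤ √β σ` gives the bound.
-/

open ProbabilityTheory

lemma stdNormalPDF_eq_gaussianPDFReal : stdNormalPDF = gaussianPDFReal 0 1 := by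
  ext z
  simp [stdNormalPDF, gaussianPDFReal]

lemma stdNormalPDF_nonneg (z : ℝ) : 0 ≤ stdNormalPDF z := by
  rw [stdNormalPDF_eq_gaussianPDFReal]
  exact gaussianPDFReal_nonneg 0 1 z

lemma integrable_stdNormalPDF : Integrable stdNormalPDF := by
  rw [stdNormalPDF_eq_gaussianPDFReal]
  exact integrable_gaussianPDFReal 0 1

lemma stdNormalCDF_add_integral_Ioi (z : ℝ) :
    stdNormalCDF z + ∫ t in Set.Ioi z, stdNormalPDF t = 1 := by
  rw [stdNormalCDF, intervalIntegral.integral_Iic_add_Ioi integrable_stdNormalPDF.integrableOn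
    integrable_stdNormalPDF.integrableOn, stdNormalPDF_eq_gaussianPDFReal]
  exact integral_gaussianPDFReal_eq_one 0 one_ne_zero

lemma stdNormalCDF_le_one (z : ℝ) : stdNormalCDF z ≤ 1 := by
  have htail : 0 ≤ ∫ t in Set.Ioi z, stdNormalPDF t :=
    setIntegral_nonneg measurableSet_Ioi fun t _ => stdNormalPDF_nonneg t
  linarith [stdNormalCDF_add_integral_Ioi z]

lemma hasDerivAt_neg_stdNormalPDF (t : ℝ) :
    HasDerivAt (fun x => -stdNormalPDF x) (t * stdNormalPDF t) t := by
  have hexp : HasDerivAt (fun x : ℝ => -x ^ 2 / 2) (-t) t :=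
    ((hasDerivAt_pow 2 t).neg.div_const 2).congr_deriv (by ring)
  refine (hexp.exp.const_mul (√(2 * π))⁻¹).neg.congr_deriv ?_
  unfold stdNormalPDF
  ring

lemma tendsto_neg_stdNormalPDF_atTop : Tendsto (fun t => -stdNormalPDF t) atTop (nhds 0) := by
  have hexp : Tendsto (fun t : ℝ => rexp (-t ^ 2 / 2)) atTop (nhds 0) :=
    tendsto_exp_atBot.comp <| Tendsto.atBot_div_const (by norm_num) <|
      tendsto_neg_atBot_iff.2 (tendsto_pow_atTop two_ne_zero)
  simpa [stdNormalPDF] using (hexp.const_mul (√(2 * π))⁻¹).neg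

lemma integrableOn_Ioi_mul_stdNormalPDF {z : ℝ} (hz : 0 ≤ z) :
    IntegrableOn (fun t => t * stdNormalPDF t) (Set.Ioi z) :=
  integrableOn_Ioi_deriv_of_nonneg' (fun t _ => hasDerivAt_neg_stdNormalPDF t)
    (fun t ht => mul_nonneg (hz.trans ht.le) (stdNormalPDF_nonneg t))
    tendsto_neg_stdNormalPDF_atTop

lemma integral_Ioi_mul_stdNormalPDF {z : ℝ} (hz : 0 ≤ z) :
    ∫ t in Set.Ioi z, t * stdNormalPDF t = stdNormalPDF z := by
  simpa using integral_Ioi_of_hasDerivAt_of_nonneg' (fun t _ => hasDerivAt_neg_stdNormalPDF t)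
    (fun t ht => mul_nonneg (hz.trans ht.le) (stdNormalPDF_nonneg t))
    tendsto_neg_stdNormalPDF_atTop

lemma mul_one_sub_stdNormalCDF_le {z : ℝ} (hz : 0 ≤ z) :
    z * (1 - stdNormalCDF z) ≤ stdNormalPDF z := by
  calc z * (1 - stdNormalCDF z)
      = ∫ t in Set.Ioi z, z * stdNormalPDF t := by
        rw [integral_const_mul, ← stdNormalCDF_add_integral_Ioi z, add_sub_cancel_left]
    _ ≤ ∫ t in Set.Ioi z, t * stdNormalPDF t :=
        setIntegral_mono_on (integrable_stdNormalPDF.const_mul z).integrableOn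
          (integrableOn_Ioi_mul_stdNormalPDF hz) measurableSet_Ioi
          fun t ht => mul_le_mul_of_nonneg_right (le_of_lt ht) (stdNormalPDF_nonneg t)
    _ = stdNormalPDF z := integral_Ioi_mul_stdNormalPDF hz

lemma le_tau (z : ℝ) : z ≤ tau z := by
  rw [tau]
  rcases le_or_gt z 0 with hz | hz
  · nlinarith [stdNormalPDF_nonneg z, stdNormalCDF_le_one z]
  · linarith [mul_one_sub_stdNormalCDF_le hz.le]

theorem term_A_bound_general (μ f ystar σ β : ℝ) (hσ : 0 < σ)
    (h : |μ - f| ≤ Real.sqrt β * σ) :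
    f - ystar ≤ σ * tau ((μ - ystar) / σ) + Real.sqrt β * σ := by
  have hf : f - μ ≤ √β * σ := (abs_sub_le_iff.1 h).2
  have hμ : μ - ystar ≤ σ * tau ((μ - ystar) / σ) := by
    simpa [mul_div_cancel₀ _ hσ.ne'] using
      mul_le_mul_of_nonneg_left (le_tau ((μ - ystar) / σ)) hσ.le
  linarith

theorem term_A_bound (μ f ystar σ β : ℝ) (hσ : 0 < σ) (hβ : 0 ≤ β)
    (h : |μ - f| ≤ Real.sqrt β * σ) :
    f - ystar ≤ σ * tau ((μ - ystar) / σ) + Real.sqrt β * σ :=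
  term_A_bound_general μ f ystar σ β hσ h
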